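/- arXiv:1605.08244 — 2 statements merged into one kernel-verified Lean document; each statement's English description precedes it below -/
import Mathlib

section
/- If λ is an element of the profinite completion Ẑ of the integers, n is a nonzero integer, and the product λ·n lies in the image of ℤ in Ẑ, then λ itself lies in the image of ℤ. -/
/-- The profinite completion of `ℤ`, realised as the subring of compatible
families in `∏ n, ZMod n` (the inverse limit of the rings `ℤ/nℤ`). -/
def ZHatSubring : Subring (∀ n : ℕ+, ZMod n) where
  carrier := {f | ∀ (m n : ℕ+) (h : (m : ℕ) ∣ (n : ℕ)),
    ZMod.castHom h (ZMod m) (f n) = f m}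
  mul_mem' := by
    intro a b ha hb m n h
    simp only [Pi.mul_apply, map_mul, ha m n h, hb m n h]
  one_mem' := by
    intro m n h
    exact map_one (ZMod.castHom h (ZMod m))
  add_mem' := by
    intro a b ha hb m n h
    simp only [Pi.add_apply, map_add, ha m n h, hb m n h]
  zero_mem' := by
    intro m n h
    exact map_zero (ZMod.castHom h (ZMod m))
  neg_mem' := by
    intro a ha m n h
    simp only [Pi.neg_apply, map_neg, ha m n h]

/-- `Ẑ`, the profinite completion of the integers. -/
abbrev ZHat : Type := ZHatSubring

/-!
Reading `λ·n = z` in `ℤ/|n|` gives `n ∣ z`, say `z = n·q`, so `(λ - q)·n = 0`. It remains that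
`Ẑ` has no `ℤ`-torsion: the component of `λ - q` at `m` is the reduction of its component at
`m·|n|`, which is killed by `n` and so lies in `m·ℤ/m|n|`.
-/

theorem ZMod.intCast_eq_zero_of_intCast_mul_eq_zero {m : ℕ} {a n : ℤ} (hn : n ≠ 0)
    (h : ((a * n : ℤ) : ZMod (m * n.natAbs)) = 0) : (a : ZMod m) = 0 := by
  rw [ZMod.intCast_zmod_eq_zero_iff_dvd] at h ⊢
  rwa [← Int.natAbs_dvd_natAbs, Int.natAbs_mul, Int.natAbs_natCast,
    Nat.mul_dvd_mul_iff_right (Int.natAbs_pos.mpr hn), ← Int.natCast_dvd] at h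

namespace ZHat

@[ext]
theorem ext {x y : ZHat} (h : ∀ m, x.1 m = y.1 m) : x = y :=
  Subtype.ext (funext h)

theorem dvd_of_mul_intCast_eq_intCast {x : ZHat} {n z : ℤ} (hn : n ≠ 0) (h : x * n = z) :
    n ∣ z := by
  let N : ℕ+ := ⟨n.natAbs, Int.natAbs_pos.mpr hn⟩
  have hN : x.1 N * n = z := congrArg (·.1 N) h
  have hn0 : (n : ZMod N) = 0 :=
    (ZMod.intCast_zmod_eq_zero_iff_dvd _ _).mpr Int.natAbs_dvd_self
  rw [hn0, mul_zero, eq_comm, ZMod.intCast_zmod_eq_zero_iff_dvd] at hN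
  exact Int.natAbs_dvd.mp hN

theorem eq_zero_of_mul_intCast_eq_zero {x : ZHat} {n : ℤ} (hn : n ≠ 0) (h : x * n = 0) :
    x = 0 := by
  ext m
  let M : ℕ+ := m * ⟨n.natAbs, Int.natAbs_pos.mpr hn⟩
  obtain ⟨a, ha⟩ := ZMod.intCast_surjective (x.1 M)
  rw [← x.2 m M (dvd_mul_right _ _), ← ha, map_intCast]
  have hM : ((a * n : ℤ) : ZMod M) = 0 := by
    push_cast [ha]
    exact congrArg (·.1 M) h
  exact ZMod.intCast_eq_zero_of_intCast_mul_eq_zero hn hM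

end ZHat

/-- If `λ ∈ Ẑ`, `n` is a nonzero integer, and `λ·n` lies in the image of `ℤ`
in `Ẑ`, then `λ` lies in the image of `ℤ`. -/
theorem zhat_int_of_mul_int (lam : ZHat) (n : ℤ) (hn : n ≠ 0)
    (h : lam * (n : ZHat) ∈ Set.range (Int.cast : ℤ → ZHat)) :
    lam ∈ Set.range (Int.cast : ℤ → ZHat) := by
  obtain ⟨z, hz⟩ := h
  obtain ⟨q, rfl⟩ := ZHat.dvd_of_mul_intCast_eq_intCast hn hz.symm
  refine ⟨q, (sub_eq_zero.mp (ZHat.eq_zero_of_mul_intCast_eq_zero hn ?_)).symm⟩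
  rw [sub_mul, ← hz]
  push_cast
  ring
end

section
/- Let F be the free group on two generators a, b. Then for every prime p, the commutator [a,b] is not a p-th power in F: there is a finite p-group quotient of F in which the image of [a,b] is not a p-th power. -/
open commutatorElement

/-!
Map `F` onto the Heisenberg group over `ZMod (p ^ 2)`, a group of order `p ^ 6`, sending `a, b` to
the elementary matrices `E₁₂, E₂₃`, so that `⁅a, b⁆ ↦ E₁₃`. The `p`-th power of `(x, y, z)` is
`(p x, p y, p z + (p choose 2) x y)`. If it were `E₁₃ = (0, 0, 1)`, then `p x = 0` in `ZMod (p ^ 2)`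
forces `x ≡ 0 mod p`, and reducing the last coordinate mod `p` gives `0 = 1` in `ZMod p`.
Working mod `p ^ 2` rather than mod `p` also covers `p = 2`, where `p choose 2` is not divisible by `p`.
-/

lemma ZMod.cast_eq_zero_of_mul_eq_zero {n : ℕ} [NeZero n] {x : ZMod (n ^ 2)}
    (h : (n : ZMod (n ^ 2)) * x = 0) : (x.cast : ZMod n) = 0 := by
  have h' : n * n ∣ n * x.val := by
    rw [← sq, ← ZMod.natCast_eq_zero_iff]
    push_cast [ZMod.natCast_zmod_val]
    exact h
  rw [Nat.mul_dvd_mul_iff_left (NeZero.pos n)] at h'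
  rwa [← ZMod.natCast_val, ZMod.natCast_eq_zero_iff]

/-- `⟨x, y, z⟩` stands for the matrix `[[1, x, z], [0, 1, y], [0, 0, 1]]`. -/
@[ext] structure Heisenberg (R : Type*) where
  x : R
  y : R
  z : R

namespace Heisenberg

variable {R : Type*}

def equivProd : Heisenberg R ≃ R × R × R where
  toFun g := (g.x, g.y, g.z)
  invFun t := ⟨t.1, t.2.1, t.2.2⟩

lemma card_eq : Nat.card (Heisenberg R) = Nat.card R ^ 3 := by
  rw [Nat.card_congr equivProd, Nat.card_prod, Nat.card_prod]
  ring

instance [Finite R] : Finite (Heisenberg R) := .of_equiv _ equivProd.symm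

section CommRing

variable [CommRing R]

instance : Mul (Heisenberg R) := ⟨fun g h => ⟨g.x + h.x, g.y + h.y, g.z + h.z + g.x * h.y⟩⟩
instance : One (Heisenberg R) := ⟨⟨0, 0, 0⟩⟩
instance : Inv (Heisenberg R) := ⟨fun g => ⟨-g.x, -g.y, -g.z + g.x * g.y⟩⟩

lemma mul_def (g h : Heisenberg R) : g * h = ⟨g.x + h.x, g.y + h.y, g.z + h.z + g.x * h.y⟩ := rfl
lemma one_def : (1 : Heisenberg R) = ⟨0, 0, 0⟩ := rfl
lemma inv_def (g : Heisenberg R) : g⁻¹ = ⟨-g.x, -g.y, -g.z + g.x * g.y⟩ := rfl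

instance : Group (Heisenberg R) where
  mul_assoc f g h := by ext <;> simp only [mul_def] <;> ring
  one_mul g := by ext <;> simp [mul_def, one_def]
  mul_one g := by ext <;> simp [mul_def, one_def]
  inv_mul_cancel g := by ext <;> simp [mul_def, inv_def, one_def]

lemma pow_def (g : Heisenberg R) (k : ℕ) :
    g ^ k = ⟨k * g.x, k * g.y, k * g.z + k.choose 2 * (g.x * g.y)⟩ := by
  induction k with
  | zero => ext <;> simp [one_def]
  | succ k ih =>
    rw [pow_succ, ih]
    ext <;> simp only [mul_def, Nat.choose_succ_succ, Nat.choose_one_right] <;> push_cast <;> ring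

def a : Heisenberg R := ⟨1, 0, 0⟩
def b : Heisenberg R := ⟨0, 1, 0⟩
def c : Heisenberg R := ⟨0, 0, 1⟩

lemma commutatorElement_a_b : ⁅(a : Heisenberg R), (b : Heisenberg R)⁆ = c := by
  ext <;> simp [commutatorElement_def, mul_def, inv_def, a, b, c]

lemma mk_eq_mul (x y z : R) :
    (⟨x, y, z⟩ : Heisenberg R) = ⟨x, 0, 0⟩ * ⟨0, y, 0⟩ * ⟨0, 0, z - x * y⟩ := by
  ext <;> simp [mul_def]

end CommRing

variable {n : ℕ}

lemma mk_eq_a_pow_mul_b_pow_mul_c_pow [NeZero n] (x y z : ZMod n) :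
    (⟨x, y, z⟩ : Heisenberg (ZMod n)) = a ^ x.val * b ^ y.val * c ^ (z - x * y).val := by
  simp only [mk_eq_mul x y z, pow_def, a, b, c, ZMod.natCast_zmod_val]
  congr <;> simp

def ofFreeGroup (n : ℕ) : FreeGroup Bool →* Heisenberg (ZMod n) :=
  FreeGroup.lift fun t => if t then a else b

lemma ofFreeGroup_commutatorElement :
    ofFreeGroup n ⁅FreeGroup.of true, FreeGroup.of false⁆ = c := by
  simp [ofFreeGroup, map_commutatorElement, commutatorElement_a_b]

lemma ofFreeGroup_surjective [NeZero n] : Function.Surjective (ofFreeGroup n) := by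
  rintro ⟨x, y, z⟩
  refine ⟨FreeGroup.of true ^ x.val * FreeGroup.of false ^ y.val *
    ⁅FreeGroup.of true, FreeGroup.of false⁆ ^ (z - x * y).val, ?_⟩
  rw [map_mul, map_mul, map_pow, map_pow, map_pow, ofFreeGroup_commutatorElement,
    mk_eq_a_pow_mul_b_pow_mul_c_pow]
  simp [ofFreeGroup]

lemma pow_ne_c [Fact (1 < n)] (g : Heisenberg (ZMod (n ^ 2))) : g ^ n ≠ c := by
  intro h
  rw [pow_def, c, mk.injEq] at h
  obtain ⟨hx, -, hz⟩ := h
  have := congrArg (ZMod.castHom (dvd_pow_self n two_ne_zero) (ZMod n)) hz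
  simp [ZMod.cast_eq_zero_of_mul_eq_zero hx] at this

end Heisenberg

/-- In the free group `F` on two generators `a, b`, for every prime `p` the
commutator `[a,b]` is not a `p`-th power: there is a finite `p`-group quotient
of `F` in which the image of `[a,b]` is not a `p`-th power. -/
theorem commutator_not_pth_power (p : ℕ) (hp : p.Prime) :
    ∃ Q : GrpCat, Finite Q ∧ IsPGroup p Q ∧
      ∃ f : FreeGroup Bool →* Q, Function.Surjective f ∧
        ∀ q : Q, q ^ p ≠ f ⁅FreeGroup.of true, FreeGroup.of false⁆ := by
  have : Fact p.Prime := ⟨hp⟩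
  let e : Heisenberg (ZMod (p ^ 2)) ≃* ULift (Heisenberg (ZMod (p ^ 2))) := MulEquiv.ulift.symm
  refine ⟨GrpCat.of (ULift (Heisenberg (ZMod (p ^ 2)))), inferInstanceAs (Finite (ULift _)), ?_,
    e.toMonoidHom.comp (Heisenberg.ofFreeGroup _),
    e.surjective.comp Heisenberg.ofFreeGroup_surjective, fun q hq => ?_⟩
  · refine (IsPGroup.of_card (n := 6) ?_).of_equiv e
    rw [Heisenberg.card_eq, Nat.card_zmod, ← pow_mul]
  · apply Heisenberg.pow_ne_c (e.symm q)
    rw [← map_pow, hq, MonoidHom.comp_apply, MulEquiv.coe_toMonoidHom, MulEquiv.symm_apply_apply,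
      Heisenberg.ofFreeGroup_commutatorElement]
end
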